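/- arXiv:1603.06619 — 4 statements merged into one kernel-verified Lean document; each statement's English description precedes it below -/
import Mathlib

section
/- Let $T$ be a standard exponential random variable and $\mu > 0$. Then the cdf of $(T, T-\mu)$ is $H(x,y) = e^{-(x\wedge 0)\wedge(y+\mu)} - e^{-x \wedge (y+\mu)}$ for all $(x,y) \in \mathbb{R}^2$. Moreover, for any $\nu > -\mu$, the location-shifted function $(x,y) \mapsto H(x, y+\nu)$ equals the cdf of $(T, T - \mu - \nu)$, i.e., it has the same functional form with $\mu$ replaced by $\mu + \nu$. -/
open MeasureTheory Real

lemma aux_ofReal (t : ℝ) :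
    ENNReal.ofReal (Real.exp (-(min t 0)) - Real.exp (-t)) =
      ENNReal.ofReal (1 - Real.exp (-t)) := by
  rcases le_or_gt 0 t with h | h
  · rw [min_eq_right h, neg_zero, Real.exp_zero]
  · rw [min_eq_left h.le]
    simp only [sub_self, ENNReal.ofReal_zero]
    symm
    rw [ENNReal.ofReal_eq_zero]
    have : (1:ℝ) ≤ Real.exp (-t) := by
      rw [← Real.exp_zero]
      exact Real.exp_le_exp.2 (by linarith)
    linarith

/-- The cdf of `(T, T-μ)` for `T` standard exponential and `μ > 0`, and the
fact that location-shifting the second coordinate by `ν > -μ` gives the cdf of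
`(T, T-μ-ν)`, i.e. the same functional form with `μ` replaced by `μ + ν`. -/
theorem gp_gumbel_comonotone_shift
    {Ω : Type*} [MeasurableSpace Ω] (P : Measure Ω) [IsProbabilityMeasure P]
    (T : Ω → ℝ) (hT : Measurable T)
    (hTcdf : ∀ t : ℝ, P {ω | T ω ≤ t} = ENNReal.ofReal (1 - Real.exp (-t)))
    (μ : ℝ) (hμ : 0 < μ)
    (H : ℝ → ℝ → ℝ)
    (hH : ∀ x y : ℝ,
      H x y = Real.exp (-(min (min x 0) (y + μ))) - Real.exp (-(min x (y + μ)))) :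
    (∀ x y : ℝ, P {ω | T ω ≤ x ∧ T ω - μ ≤ y} = ENNReal.ofReal (H x y)) ∧
    (∀ ν : ℝ, -μ < ν → ∀ x y : ℝ,
      P {ω | T ω ≤ x ∧ T ω - (μ + ν) ≤ y} = ENNReal.ofReal (H x (y + ν)) ∧
      H x (y + ν) = Real.exp (-(min (min x 0) (y + (μ + ν))))
                      - Real.exp (-(min x (y + (μ + ν))))) := by
  have key : ∀ (c x y : ℝ), P {ω | T ω ≤ x ∧ T ω - c ≤ y} =
      ENNReal.ofReal (Real.exp (-(min (min x 0) (y + c))) -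
        Real.exp (-(min x (y + c)))) := by
    intro c x y
    have hset : {ω | T ω ≤ x ∧ T ω - c ≤ y} = {ω | T ω ≤ min x (y + c)} := by
      ext ω; simp [le_min_iff, sub_le_iff_le_add]
    have hmin : min (min x 0) (y + c) = min (min x (y + c)) 0 := by
      rw [min_assoc, min_comm 0 (y + c), ← min_assoc]
    rw [hset, hTcdf, hmin, ← aux_ofReal (min x (y + c))]
  refine ⟨fun x y => by rw [key μ x y, hH], fun ν hν x y => ?_⟩
  have harith : y + ν + μ = y + (μ + ν) := by ring
  constructor
  · rw [key (μ + ν) x y, hH, harith]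
  · rw [hH, harith]
end

section
/- Let $\gamma \ne 0$, $\sigma > 0$, and let $R$ be a random variable with cdf $F$, density $f$, satisfying Condition: $R \in [0,\infty)$ if $\gamma > 0$ ($R \in (-\infty,0)$ if $\gamma<0$) and $0 < E[|R|^{1/\gamma}] < \infty$. Define for $x \ge 0$ with $\sigma + \gamma x > 0$: $H^+(x) = 1 - \frac{\int_0^\infty \bar F(t^\gamma(x + \sigma/\gamma))\,dt}{\int_0^\infty \bar F(t^\gamma \sigma/\gamma)\,dt}$. Then $H^+(x) = 1 - (1 + \gamma x/\sigma)^{-1/\gamma}$, i.e., the conditional marginal of the (R)-representation generalized Pareto distribution is one-dimensional generalized Pareto with shape $\gamma$ and scale $\sigma$. -/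
open MeasureTheory Real Set

lemma gp_aux
    {Ω : Type*} [MeasurableSpace Ω] (P : Measure Ω) [IsProbabilityMeasure P]
    (γ : ℝ) (hγ : γ ≠ 0)
    (R : Ω → ℝ) (hR : Measurable R)
    (hsign : ∀ ω, if 0 < γ then 0 ≤ R ω else R ω < 0)
    (hmom_int : Integrable (fun ω => |R ω| ^ (1 / γ)) P)
    (σ' : ℝ) (hσ' : 0 < σ') :
    ∫ t in Ioi (0 : ℝ), (P {ω | R ω > t ^ γ * (σ' / γ)}).toReal
      = (|γ| / σ') ^ (1 / γ) * ∫ ω, |R ω| ^ (1 / γ) ∂P := by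
  set g : Ω → ℝ := fun ω => (|γ| / σ' * |R ω|) ^ (1 / γ) with hg
  have hcpos : 0 < |γ| / σ' := div_pos (abs_pos.mpr hγ) hσ'
  have hgeq : ∀ ω, g ω = (|γ| / σ') ^ (1 / γ) * |R ω| ^ (1 / γ) := fun ω =>
    Real.mul_rpow hcpos.le (abs_nonneg _)
  have hg_int : Integrable g P := by
    simp only [funext hgeq]
    exact hmom_int.const_mul _
  have hg_nn : 0 ≤ᵐ[P] g := Filter.Eventually.of_forall fun ω =>
    Real.rpow_nonneg (mul_nonneg hcpos.le (abs_nonneg _)) _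
  have key := hg_int.integral_eq_integral_meas_lt hg_nn
  have hsets : ∀ t ∈ Ioi (0:ℝ),
      {ω | R ω > t ^ γ * (σ' / γ)} = {ω | t < g ω} := by
    intro t ht
    have ht' : (0:ℝ) < t := ht
    ext ω
    simp only [mem_setOf_eq, hg, one_div]
    rcases lt_or_gt_of_ne hγ with hneg | hpos
    · -- γ < 0, R ω < 0
      have hRneg : R ω < 0 := by have := hsign ω; rwa [if_neg (not_lt.mpr hneg.le)] at this
      have habs : |R ω| = -R ω := abs_of_neg hRneg
      have hc : 0 < |γ| / σ' * |R ω| := mul_pos hcpos (abs_pos.mpr hRneg.ne)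
      rw [lt_rpow_inv_iff_of_neg ht' hc hneg]
      have hγabs : |γ| = -γ := abs_of_neg hneg
      have htγ : 0 < t ^ γ := Real.rpow_pos_of_pos ht' _
      have hng : (0:ℝ) < -γ := neg_pos.mpr hneg
      constructor
      · intro h
        rw [hγabs, habs]
        calc -γ / σ' * -R ω = -(R ω) * (-γ/σ') := by ring
          _ < -(t ^ γ * (σ' / γ)) * (-γ/σ') := by
              apply mul_lt_mul_of_pos_right (by linarith)
              exact div_pos hng hσ'
          _ = t ^ γ := by field_simp
      · intro h
        rw [hγabs, habs] at h
        have hpos' : (0:ℝ) < σ' / (-γ) := div_pos hσ' hng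
        have h2 : (-γ / σ' * -R ω) * (σ' / (-γ)) < t ^ γ * (σ' / (-γ)) :=
          mul_lt_mul_of_pos_right h hpos'
        have h3 : (-γ / σ' * -R ω) * (σ' / (-γ)) = -R ω := by field_simp
        have h4 : t ^ γ * (σ' / (-γ)) = -(t ^ γ * (σ' / γ)) := by
          rw [div_neg]; ring
        rw [h3, h4] at h2
        linarith
    · -- 0 < γ, 0 ≤ R ω
      have hRnn : 0 ≤ R ω := by have := hsign ω; rwa [if_pos hpos] at this
      have hc : 0 ≤ |γ| / σ' * |R ω| := mul_nonneg hcpos.le (abs_nonneg _)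
      rw [lt_rpow_inv_iff_of_pos ht'.le hc hpos]
      have hγabs : |γ| = γ := abs_of_pos hpos
      have habs : |R ω| = R ω := abs_of_nonneg hRnn
      rw [hγabs, habs]
      constructor
      · intro h
        calc t ^ γ = t ^ γ * (σ' / γ) * (γ / σ') := by field_simp
          _ < R ω * (γ / σ') := by
              apply mul_lt_mul_of_pos_right h; positivity
          _ = γ / σ' * R ω := by ring
      · intro h
        calc t ^ γ * (σ' / γ) < γ / σ' * R ω * (σ' / γ) := by
              apply mul_lt_mul_of_pos_right h; positivity
          _ = R ω := by field_simp
  calc ∫ t in Ioi (0:ℝ), (P {ω | R ω > t ^ γ * (σ' / γ)}).toReal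
      = ∫ t in Ioi (0:ℝ), (P {ω | t < g ω}).toReal := by
        apply setIntegral_congr_fun measurableSet_Ioi
        intro t ht; dsimp only; rw [hsets t ht]
    _ = ∫ ω, g ω ∂P := key.symm
    _ = (|γ| / σ') ^ (1 / γ) * ∫ ω, |R ω| ^ (1 / γ) ∂P := by
        simp only [funext hgeq]
        exact integral_const_mul _ _

/-- The conditional marginal of the (R)-representation generalized Pareto
distribution is one-dimensional generalized Pareto with shape `γ` and scale
`σ`: `H⁺(x) = 1 - (1 + γx/σ)^{-1/γ}`. -/
theorem gp_R_conditional_margin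
    {Ω : Type*} [MeasurableSpace Ω] (P : Measure Ω) [IsProbabilityMeasure P]
    (γ σ : ℝ) (hγ : γ ≠ 0) (hσ : 0 < σ)
    (R : Ω → ℝ) (hR : Measurable R)
    (hsign : ∀ ω, if 0 < γ then 0 ≤ R ω else R ω < 0)
    (hmom_pos : 0 < ∫ ω, |R ω| ^ (1 / γ) ∂P)
    (hmom_int : Integrable (fun ω => |R ω| ^ (1 / γ)) P)
    (x : ℝ) (hx : 0 ≤ x) (hσx : 0 < σ + γ * x) :
    1 - (∫ t in Ioi (0 : ℝ), (P {ω | R ω > t ^ γ * (x + σ / γ)}).toReal)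
          / (∫ t in Ioi (0 : ℝ), (P {ω | R ω > t ^ γ * (σ / γ)}).toReal)
      = 1 - (1 + γ * x / σ) ^ (-(1 / γ)) := by
  have hxσ : x + σ / γ = (σ + γ * x) / γ := by field_simp; ring
  have hN : (∫ t in Ioi (0 : ℝ), (P {ω | R ω > t ^ γ * (x + σ / γ)}).toReal)
      = (|γ| / (σ + γ * x)) ^ (1 / γ) * ∫ ω, |R ω| ^ (1 / γ) ∂P := by
    rw [hxσ]
    exact gp_aux P γ hγ R hR hsign hmom_int _ hσx
  have hD := gp_aux P γ hγ R hR hsign hmom_int σ hσ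
  rw [hN, hD]
  have hM : (∫ ω, |R ω| ^ (1 / γ) ∂P) ≠ 0 := hmom_pos.ne'
  have hγa : (0:ℝ) < |γ| := abs_pos.mpr hγ
  rw [mul_div_mul_right _ _ hM]
  congr 1
  rw [← Real.div_rpow (by positivity) (by positivity)]
  have h1 : |γ| / (σ + γ * x) / (|γ| / σ) = σ / (σ + γ * x) := by
    field_simp
  rw [h1]
  have h2 : σ / (σ + γ * x) = (1 + γ * x / σ)⁻¹ := by
    rw [show 1 + γ * x / σ = (σ + γ * x) / σ by field_simp, inv_div]
  have h1p : (0:ℝ) < 1 + γ * x / σ := by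
    have : 1 + γ * x / σ = (σ + γ * x) / σ := by field_simp
    rw [this]; positivity
  rw [h2, Real.inv_rpow h1p.le, ← Real.rpow_neg h1p.le]
end

section
/- Let $\gamma \ne 0$, let $R$ be a random variable satisfying $0 < E[|R|^{1/\gamma}] < \infty$ with $R \ge 0$ if $\gamma>0$ and $R<0$ if $\gamma<0$, and let $\sigma > 0$. Then for all $x \ge 0$ with $\sigma + \gamma x > 0$, $\frac{\int_0^\infty \Pr[R/t^\gamma - \sigma/\gamma > x]\,dt}{\int_0^\infty \Pr[R/t^\gamma - \sigma/\gamma > 0]\,dt} = \left(1 + \frac{\gamma}{\sigma}x\right)^{-1/\gamma}.$ -/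
open MeasureTheory Real Set

/-!
For `t > 0` and `γ b > 0`, the event `R > t ^ γ * b` is the event `t < (R / b) ^ (1 / γ)`, because
`R` has the sign of `γ`, hence of `b`. The layer cake formula therefore turns
`∫₀^∞ P[R > t ^ γ * b] dt` into `E[(R / b) ^ (1 / γ)] = |b| ^ (-1 / γ) E[|R| ^ (1 / γ)]`.
The numerator and denominator are the cases `b = x + σ / γ` and `b = σ / γ`, so the moment cancels
in the ratio, leaving `((x + σ / γ) / (σ / γ)) ^ (-1 / γ) = (1 + γ x / σ) ^ (-1 / γ)`.
-/

lemma div_nonneg_of_sign {γ b r : ℝ} (hb : 0 < γ * b) (hr : if 0 < γ then 0 ≤ r else r < 0) :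
    0 ≤ r / b := by
  split_ifs at hr with hγ
  · exact div_nonneg hr (pos_of_mul_pos_right hb hγ.le).le
  · exact (div_pos_of_neg_of_neg hr (neg_of_mul_pos_right hb (not_lt.mp hγ))).le

lemma rpow_mul_lt_iff_lt_div_rpow_inv {γ b r t : ℝ} (ht : 0 < t) (hb : 0 < γ * b)
    (hr : if 0 < γ then 0 ≤ r else r < 0) : t ^ γ * b < r ↔ t < (r / b) ^ γ⁻¹ := by
  have hrb := div_nonneg_of_sign hb hr
  split_ifs at hr with hγ
  · have hb' : 0 < b := pos_of_mul_pos_right hb hγ.le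
    rw [lt_rpow_inv_iff_of_pos ht.le hrb hγ, lt_div_iff₀ hb']
  · have hγ' : γ < 0 := (not_lt.mp hγ).lt_of_ne (left_ne_zero_of_mul hb.ne')
    have hb' : b < 0 := neg_of_mul_pos_right hb hγ'.le
    rw [lt_rpow_inv_iff_of_neg ht (div_pos_of_neg_of_neg hr hb') hγ', div_lt_iff_of_neg hb']

lemma div_rpow_of_div_nonneg {r b : ℝ} (h : 0 ≤ r / b) (p : ℝ) :
    (r / b) ^ p = |r| ^ p * |b| ^ (-p) := by
  rw [← abs_of_nonneg h, abs_div, div_rpow (abs_nonneg _) (abs_nonneg _), rpow_neg (abs_nonneg _),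
    div_eq_mul_inv]

theorem integral_measureReal_rpow_mul_lt {Ω : Type*} [MeasurableSpace Ω] (μ : Measure Ω)
    {γ b : ℝ} {R : Ω → ℝ} (hb : 0 < γ * b) (hsign : ∀ ω, if 0 < γ then 0 ≤ R ω else R ω < 0)
    (hint : Integrable (fun ω => |R ω| ^ (1 / γ)) μ) :
    ∫ t in Ioi 0, μ.real {ω | t ^ γ * b < R ω} = (∫ ω, |R ω| ^ (1 / γ) ∂μ) * |b| ^ (-(1 / γ)) := by
  have hg : (fun ω => (R ω / b) ^ γ⁻¹) = fun ω => |R ω| ^ (1 / γ) * |b| ^ (-(1 / γ)) := by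
    ext ω
    rw [← one_div, div_rpow_of_div_nonneg (div_nonneg_of_sign hb (hsign ω))]
  have hgint : Integrable (fun ω => (R ω / b) ^ γ⁻¹) μ := hg ▸ hint.mul_const _
  have hgnn : 0 ≤ᵐ[μ] fun ω => (R ω / b) ^ γ⁻¹ :=
    ae_of_all _ fun ω => rpow_nonneg (div_nonneg_of_sign hb (hsign ω)) _
  calc ∫ t in Ioi 0, μ.real {ω | t ^ γ * b < R ω}
      = ∫ t in Ioi 0, μ.real {ω | t < (R ω / b) ^ γ⁻¹} :=
        setIntegral_congr_fun measurableSet_Ioi fun t ht => by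
          simp_rw [rpow_mul_lt_iff_lt_div_rpow_inv ht hb (hsign _)]
    _ = ∫ ω, (R ω / b) ^ γ⁻¹ ∂μ := (hgint.integral_eq_integral_meas_lt hgnn).symm
    _ = (∫ ω, |R ω| ^ (1 / γ) ∂μ) * |b| ^ (-(1 / γ)) := by rw [hg, integral_mul_const]

lemma lt_div_sub_iff_mul_add_lt {r s c y : ℝ} (hs : 0 < s) : y < r / s - c ↔ s * (y + c) < r := by
  rw [lt_sub_iff_add_lt, lt_div_iff₀ hs, mul_comm]

theorem gp_sum_conditional_pareto_general
    {Ω : Type*} [MeasurableSpace Ω] (P : Measure Ω)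
    (γ σ : ℝ) (hγ : γ ≠ 0) (hσ : 0 < σ)
    (R : Ω → ℝ)
    (hsign : ∀ ω, if 0 < γ then 0 ≤ R ω else R ω < 0)
    (hmom_pos : 0 < ∫ ω, |R ω| ^ (1 / γ) ∂P)
    (hmom_int : Integrable (fun ω => |R ω| ^ (1 / γ)) P)
    (x : ℝ) (hσx : 0 < σ + γ * x) :
    (∫ t in Ioi (0 : ℝ), (P {ω | R ω / t ^ γ - σ / γ > x}).toReal)
        / (∫ t in Ioi (0 : ℝ), (P {ω | R ω / t ^ γ - σ / γ > 0}).toReal)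
      = (1 + γ / σ * x) ^ (-(1 / γ)) := by
  have tail : ∀ y, 0 < γ * (y + σ / γ) →
      ∫ t in Ioi (0 : ℝ), (P {ω | R ω / t ^ γ - σ / γ > y}).toReal
        = (∫ ω, |R ω| ^ (1 / γ) ∂P) * |y + σ / γ| ^ (-(1 / γ)) := fun y hy => by
    rw [← integral_measureReal_rpow_mul_lt P hy hsign hmom_int]
    refine setIntegral_congr_fun measurableSet_Ioi fun t ht => ?_
    simp only [gt_iff_lt, lt_div_sub_iff_mul_add_lt (rpow_pos_of_pos ht γ), measureReal_def]
  have hσγ : γ * (σ / γ) = σ := mul_div_cancel₀ σ hγ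
  rw [tail x (by rw [mul_add, hσγ]; linarith), tail 0 (by rw [zero_add, hσγ]; exact hσ),
    mul_div_mul_left _ _ hmom_pos.ne', ← div_rpow (abs_nonneg _) (abs_nonneg _), ← abs_div]
  have hratio : (x + σ / γ) / (0 + σ / γ) = 1 + γ / σ * x := by
    field_simp [hσ.ne']
    ring
  have hpos : 0 < 1 + γ / σ * x := by
    rw [div_mul_eq_mul_div, one_add_div hσ.ne']
    exact div_pos (by linarith) hσ
  rw [hratio, abs_of_pos hpos]

/-- Core computation of Proposition 6.2: the ratio of exceedance integrals of
`R/t^γ - σ/γ` over levels `x` and `0` equals `(1 + γx/σ)^{-1/γ}`. -/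
theorem gp_sum_conditional_pareto
    {Ω : Type*} [MeasurableSpace Ω] (P : Measure Ω) [IsProbabilityMeasure P]
    (γ σ : ℝ) (hγ : γ ≠ 0) (hσ : 0 < σ)
    (R : Ω → ℝ) (hR : Measurable R)
    (hsign : ∀ ω, if 0 < γ then 0 ≤ R ω else R ω < 0)
    (hmom_pos : 0 < ∫ ω, |R ω| ^ (1 / γ) ∂P)
    (hmom_int : Integrable (fun ω => |R ω| ^ (1 / γ)) P)
    (x : ℝ) (hx : 0 ≤ x) (hσx : 0 < σ + γ * x) :
    (∫ t in Ioi (0 : ℝ), (P {ω | R ω / t ^ γ - σ / γ > x}).toReal)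
        / (∫ t in Ioi (0 : ℝ), (P {ω | R ω / t ^ γ - σ / γ > 0}).toReal)
      = (1 + γ / σ * x) ^ (-(1 / γ)) :=
  gp_sum_conditional_pareto_general P γ σ hγ hσ R hsign hmom_pos hmom_int x hσx
end

section
/- Let $F$ be a cdf on $\mathbb{R}^d$ and $c > 0$. For $\mathbf{x} \in \mathbb{R}^d$ with $\mathbf{x} \not\le \mathbf{0}$ define $H(\mathbf{x}) = \frac{\int_0^\infty\{F(\mathbf{x} + \mathbf{1}\log t) - F(\mathbf{x}\wedge\mathbf{0} + \mathbf{1}\log t)\}\,dt}{\int_0^\infty \bar F(\mathbf{1}\log t)\,dt}$, assuming $0 < \int_0^\infty \bar F(\mathbf{1}\log t)\,dt < \infty$. Given two such cdf-s $F_1, F_2$ with normalizing constants $c_i = 1/\int_0^\infty \bar F_i(\mathbf{1}\log t)\,dt$ and corresponding $H_1, H_2$, and $p \in (0,1)$, set $F = \frac{pc_1}{pc_1 + (1-p)c_2}F_1 + \frac{(1-p)c_2}{pc_1+(1-p)c_2}F_2$. Then $pH_1 + (1-p)H_2$ equals the $H$ constructed from $F$, and the normalizing constant of $F$ is $1/(pc_1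 + (1-p)c_2)^{-1}$, i.e., $\int_0^\infty \bar F(\mathbf{1}\log t)\,dt = 1/(pc_1+(1-p)c_2)$. -/
/-!
Both claims are linearity of the integral over `(0, ∞)`. The mixture weights are
`p cᵢ / S` with `S = p c₁ + (1 - p) c₂`, so multiplying the integral for `F` by `S`
gives back `p c₁ ∫ … F₁ + (1 - p) c₂ ∫ … F₂ = p H₁ + (1 - p) H₂`, and the tail
integral of `F` is `(p c₁ / c₁ + (1 - p) c₂ / c₂) / S = 1 / S`. The only analytic
input is integrability of the increments `t ↦ F(v + log t) - F(u + log t)` for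
`u ≤ v`: they are dominated by the tail `1 - F(m + log t) = 1 - F(log (eᵐ t))`,
with `m` below every coordinate of `u`, which is a rescaling of the integrable tail.
-/

open MeasureTheory Real Set

section Increments

variable {ι : Type*} {F : (ι → ℝ) → ℝ}

theorem monotoneOn_comp_add_log (hF : Monotone F) (v : ι → ℝ) :
    MonotoneOn (fun t => F (fun j => v j + log t)) (Ioi 0) :=
  fun _ hs _ _ hst => hF fun _ => by simpa using log_le_log hs hst

theorem integrableOn_increment_comp_add_log [Finite ι] (hF : Monotone F) (hF1 : ∀ y, F y ≤ 1)
    (hInt : IntegrableOn (fun t => 1 - F (fun _ => log t)) (Ioi 0))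
    {u v : ι → ℝ} (huv : u ≤ v) :
    IntegrableOn (fun t => F (fun j => v j + log t) - F (fun j => u j + log t)) (Ioi 0) := by
  set m := ⨅ j, u j
  have hm : ∀ j, m ≤ u j := ciInf_le (Finite.bddBelow_range u)
  have hdom : IntegrableOn (fun t => 1 - F (fun _ => log (exp m * t))) (Ioi 0) :=
    (integrableOn_Ioi_comp_mul_left_iff (fun t => 1 - F (fun _ => log t)) 0
      (exp_pos m)).2 (by simpa using hInt)
  refine hdom.mono' ((aemeasurable_restrict_of_monotoneOn measurableSet_Ioi
    (monotoneOn_comp_add_log hF v)).sub (aemeasurable_restrict_of_monotoneOn measurableSet_Ioi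
    (monotoneOn_comp_add_log hF u))).aestronglyMeasurable ?_
  filter_upwards [ae_restrict_mem measurableSet_Ioi] with t (ht : 0 < t)
  have hlog : log (exp m * t) = m + log t := by rw [log_mul (exp_ne_zero m) ht.ne', log_exp]
  have hincr : F (fun j => u j + log t) ≤ F (fun j => v j + log t) :=
    hF fun j => add_le_add_left (huv j) _
  have htail : F (fun _ => log (exp m * t)) ≤ F (fun j => u j + log t) :=
    hF fun j => by simpa only [hlog] using add_le_add_left (hm j) _
  rw [norm_of_nonneg (sub_nonneg.2 hincr)]
  linarith [hF1 (fun j => v j + log t)]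

end Increments

section Mixture

variable {X : Type*} {s : Set ℝ} {F F₁ F₂ : X → ℝ} {a₁ a₂ : ℝ}

theorem setIntegral_eq_mul_add_mul {f f₁ f₂ : ℝ → ℝ}
    (hf : ∀ t, f t = a₁ * f₁ t + a₂ * f₂ t) (h₁ : IntegrableOn f₁ s) (h₂ : IntegrableOn f₂ s) :
    ∫ t in s, f t = a₁ * (∫ t in s, f₁ t) + a₂ * ∫ t in s, f₂ t := by
  simp_rw [hf]
  rw [integral_add (h₁.const_mul a₁) (h₂.const_mul a₂), integral_const_mul, integral_const_mul]

theorem setIntegral_sub_of_mixture (hF : ∀ y, F y = a₁ * F₁ y + a₂ * F₂ y) {u v : ℝ → X}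
    (h₁ : IntegrableOn (fun t => F₁ (v t) - F₁ (u t)) s)
    (h₂ : IntegrableOn (fun t => F₂ (v t) - F₂ (u t)) s) :
    ∫ t in s, F (v t) - F (u t) =
      a₁ * (∫ t in s, F₁ (v t) - F₁ (u t)) + a₂ * ∫ t in s, F₂ (v t) - F₂ (u t) :=
  setIntegral_eq_mul_add_mul (fun t => by rw [hF, hF]; ring) h₁ h₂

theorem setIntegral_one_sub_of_mixture (hF : ∀ y, F y = a₁ * F₁ y + a₂ * F₂ y)
    (ha : a₁ + a₂ = 1) {u : ℝ → X} (h₁ : IntegrableOn (fun t => 1 - F₁ (u t)) s)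
    (h₂ : IntegrableOn (fun t => 1 - F₂ (u t)) s) :
    ∫ t in s, 1 - F (u t) = a₁ * (∫ t in s, 1 - F₁ (u t)) + a₂ * ∫ t in s, 1 - F₂ (u t) :=
  setIntegral_eq_mul_add_mul (fun t => by rw [hF]; linear_combination -ha) h₁ h₂

end Mixture

/-- Mixture closure (Theorem 2.2(v), `γ = 0`, `σ = 1` case): a convex mixture
`pH₁ + (1-p)H₂` of two generalized Pareto distributions built from generating
cdf-s `F₁, F₂` is the generalized Pareto distribution built from the reweighted
mixture `F`, whose normalizing constant is `1/(pc₁ + (1-p)c₂)`. -/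
theorem gp_mixture_closure
    (d : ℕ) (F1 F2 F : (Fin d → ℝ) → ℝ)
    (hF1mono : Monotone F1) (hF2mono : Monotone F2)
    (hF1range : ∀ y, 0 ≤ F1 y ∧ F1 y ≤ 1) (hF2range : ∀ y, 0 ≤ F2 y ∧ F2 y ≤ 1)
    (hInt1 : IntegrableOn (fun t => 1 - F1 (fun _ => Real.log t)) (Ioi (0 : ℝ)))
    (hInt2 : IntegrableOn (fun t => 1 - F2 (fun _ => Real.log t)) (Ioi (0 : ℝ)))
    (hpos1 : 0 < ∫ t in Ioi (0 : ℝ), (1 - F1 (fun _ => Real.log t)))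
    (hpos2 : 0 < ∫ t in Ioi (0 : ℝ), (1 - F2 (fun _ => Real.log t)))
    (c1 c2 p : ℝ) (hp : 0 < p) (hp1 : p < 1)
    (hc1 : c1 = (∫ t in Ioi (0 : ℝ), (1 - F1 (fun _ => Real.log t)))⁻¹)
    (hc2 : c2 = (∫ t in Ioi (0 : ℝ), (1 - F2 (fun _ => Real.log t)))⁻¹)
    (hF : ∀ y, F y = (p * c1 / (p * c1 + (1 - p) * c2)) * F1 y
        + ((1 - p) * c2 / (p * c1 + (1 - p) * c2)) * F2 y)
    (H1 H2 : (Fin d → ℝ) → ℝ)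
    (hH1 : ∀ x, H1 x = c1 * ∫ t in Ioi (0 : ℝ),
        (F1 (fun j => x j + Real.log t) - F1 (fun j => min (x j) 0 + Real.log t)))
    (hH2 : ∀ x, H2 x = c2 * ∫ t in Ioi (0 : ℝ),
        (F2 (fun j => x j + Real.log t) - F2 (fun j => min (x j) 0 + Real.log t))) :
    (∀ x : Fin d → ℝ, ¬ x ≤ 0 →
      p * H1 x + (1 - p) * H2 x
        = (p * c1 + (1 - p) * c2) * ∫ t in Ioi (0 : ℝ),
            (F (fun j => x j + Real.log t) - F (fun j => min (x j) 0 + Real.log t))) ∧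
    (∫ t in Ioi (0 : ℝ), (1 - F (fun _ => Real.log t))
        = 1 / (p * c1 + (1 - p) * c2)) := by
  have hc1pos : 0 < c1 := hc1 ▸ inv_pos.2 hpos1
  have hc2pos : 0 < c2 := hc2 ▸ inv_pos.2 hpos2
  have hS : 0 < p * c1 + (1 - p) * c2 := by nlinarith
  constructor
  · intro x _
    have hmin : (fun j => min (x j) 0) ≤ x := fun j => min_le_left _ _
    rw [hH1, hH2, setIntegral_sub_of_mixture hF
      (integrableOn_increment_comp_add_log hF1mono (fun y => (hF1range y).2) hInt1 hmin)
      (integrableOn_increment_comp_add_log hF2mono (fun y => (hF2range y).2) hInt2 hmin)]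
    field_simp
  · have hweights : p * c1 / (p * c1 + (1 - p) * c2) + (1 - p) * c2 / (p * c1 + (1 - p) * c2)
        = 1 := by field_simp
    have hI1 : ∫ t in Ioi (0 : ℝ), 1 - F1 (fun _ => log t) = c1⁻¹ := by rw [hc1, inv_inv]
    have hI2 : ∫ t in Ioi (0 : ℝ), 1 - F2 (fun _ => log t) = c2⁻¹ := by rw [hc2, inv_inv]
    rw [setIntegral_one_sub_of_mixture hF hweights hInt1 hInt2, hI1, hI2]
    field_simp
    ring
end
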